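/- For every n ≥ 1, setting b(n) = ⌊(n+2)/φ⌋ − 1 and c(n) = ⌊(n+1)φ⌋, the entries A(n,i) for b(n) < i < c(n) form a permutation of the set {b(n)+1, …, c(n)−1} which leaves no element fixed; that is, for each i with b(n) < i < c(n) there exists j with b(n) < j < c(n) and A(n,i) = j, the restricted map is a bijection of that interval, and A(n,i) ≠ i for all i with b(n) < i < c(n). -/

import Mathlib

/-- The golden ratio `(1 + √5)/2`. -/
noncomputable def phi : ℝ := (1 + Real.sqrt 5) / 2

/-- The Hurt-Sada array `A : ℕ → ℕ → ℕ`.  Row `0` is the identity sequence;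
row `n+1` is obtained from row `n` by moving the entry `n+1` (located at the unique
position `p` with `A n p = n+1`) by `n+1` places to the right, shifting the jumped-over
entries one place left. -/
noncomputable def A : ℕ → ℕ → ℕ
  | 0, k => k
  | n + 1, j =>
    let p := sInf {i | A n i = n + 1}
    if j < p then A n j
    else if j < p + (n + 1) then A n (j + 1)
    else if j = p + (n + 1) then n + 1
    else A n j

/-!
Write `W j = ⌊jφ⌋` and `U j = W j + j = ⌊jφ²⌋` for the lower and upper Wythoff sequences, which
partition the positive integers, and let `ι m` be the index `j` with `m = W j` or `m = U j`.
By induction on `n`, row `n` of the array is the identity outside `[⌊(n+2)/φ⌋, ⌊(n+1)φ⌋)` and is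
`i ↦ ι (i + n + 2) - 1` on it: the entry `n + 1` sits at position `⌊(n+2)/φ⌋`, and moving it is
matched by Wythoff identities such as `ι (U j + 1) = W j + 1`. On that segment `i + n + 2` runs
through `[W (n+2), U (n+1)]`, whose lower Wythoff numbers have the indices `n + 2, …, W (n+1)` and
whose upper ones the indices `⌊(n+2)/φ⌋ + 1, …, n + 1`; shifted down by one these two ranges tile
the segment. A fixed point `i` would force `⌊(i+1)/φ⌋ = n + 1` or `W (i+1) = n + 1`, both out of
range.
-/

open Set

lemma phi_pos : 0 < phi := Real.goldenRatio_pos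

lemma one_lt_phi : 1 < phi := Real.one_lt_goldenRatio

lemma phi_lt_two : phi < 2 := Real.goldenRatio_lt_two

lemma three_halves_lt_phi : 3 / 2 < phi := by
  have : (2 : ℝ) < √5 := Real.lt_sqrt_of_sq_lt (by norm_num)
  unfold phi
  linarith

lemma irrational_phi : Irrational phi := Real.goldenRatio_irrational

lemma mul_phi_mul_phi (x : ℝ) : x * phi * phi = x * phi + x := by
  have h : phi ^ 2 = phi + 1 := Real.goldenRatio_sq
  linear_combination x * h

noncomputable def floorDivPhi (m : ℕ) : ℕ := ⌊(m : ℝ) / phi⌋₊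

noncomputable def lowerWythoff (j : ℕ) : ℕ := ⌊(j : ℝ) * phi⌋₊

noncomputable def upperWythoff (j : ℕ) : ℕ := lowerWythoff j + j

section Floors

variable {m j y : ℕ}

lemma floorDivPhi_eq_of_le_of_lt (h₁ : (y : ℝ) * phi ≤ m) (h₂ : (m : ℝ) < (y + 1) * phi) :
    floorDivPhi m = y := by
  rw [floorDivPhi, Nat.floor_eq_iff (div_nonneg m.cast_nonneg phi_pos.le), le_div_iff₀ phi_pos,
    div_lt_iff₀ phi_pos]
  exact ⟨h₁, h₂⟩

lemma lowerWythoff_eq_of_le_of_lt (h₁ : (y : ℝ) ≤ j * phi) (h₂ : (j : ℝ) * phi < y + 1) :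
    lowerWythoff j = y := by
  rw [lowerWythoff, Nat.floor_eq_iff (mul_nonneg j.cast_nonneg phi_pos.le)]
  exact ⟨h₁, h₂⟩

lemma floorDivPhi_mul_phi_le (m : ℕ) : (floorDivPhi m : ℝ) * phi ≤ m :=
  (le_div_iff₀ phi_pos).1 (Nat.floor_le (div_nonneg m.cast_nonneg phi_pos.le))

lemma lt_floorDivPhi_add_one_mul_phi (m : ℕ) : (m : ℝ) < (floorDivPhi m + 1) * phi :=
  (div_lt_iff₀ phi_pos).1 (Nat.lt_floor_add_one _)

lemma floorDivPhi_mul_phi_lt (hm : m ≠ 0) : (floorDivPhi m : ℝ) * phi < m := by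
  refine (floorDivPhi_mul_phi_le m).lt_of_ne fun h => ?_
  rcases Nat.eq_zero_or_pos (floorDivPhi m) with h0 | h0
  · rw [h0, Nat.cast_zero, zero_mul] at h
    exact hm (by exact_mod_cast h.symm)
  · exact (irrational_phi.natCast_mul h0.ne').ne_nat m h

lemma lowerWythoff_le (j : ℕ) : (lowerWythoff j : ℝ) ≤ j * phi :=
  Nat.floor_le (mul_nonneg j.cast_nonneg phi_pos.le)

lemma lt_lowerWythoff_add_one (j : ℕ) : (j : ℝ) * phi < lowerWythoff j + 1 :=
  Nat.lt_floor_add_one _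

lemma lowerWythoff_lt (hj : j ≠ 0) : (lowerWythoff j : ℝ) < j * phi :=
  (lowerWythoff_le j).lt_of_ne fun h => (irrational_phi.natCast_mul hj).ne_nat _ h.symm

lemma lowerWythoff_eq_add_floorDivPhi (j : ℕ) : lowerWythoff j = j + floorDivPhi j := by
  have h : (j : ℝ) * phi = j / phi + j := by
    field_simp [phi_pos.ne']
    linear_combination mul_phi_mul_phi j
  rw [lowerWythoff, h, Nat.floor_add_natCast (div_nonneg j.cast_nonneg phi_pos.le), floorDivPhi,
    add_comm]

lemma floorDivPhi_mono : Monotone floorDivPhi := fun _ _ h =>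
  Nat.floor_mono (div_le_div_of_nonneg_right (by exact_mod_cast h) phi_pos.le)

lemma floorDivPhi_succ_le (m : ℕ) : floorDivPhi (m + 1) ≤ floorDivPhi m + 1 := by
  have h := lt_floorDivPhi_add_one_mul_phi m
  have : floorDivPhi (m + 1) < floorDivPhi m + 2 := by
    refine (Nat.floor_lt (div_nonneg (m + 1).cast_nonneg phi_pos.le)).2 ?_
    rw [div_lt_iff₀ phi_pos]
    push_cast
    nlinarith [one_lt_phi]
  omega

lemma floorDivPhi_le_self (m : ℕ) : floorDivPhi m ≤ m :=
  (Nat.floor_le_floor (div_le_self m.cast_nonneg one_lt_phi.le)).trans (Nat.floor_natCast m).le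

lemma floorDivPhi_lt_self (hm : m ≠ 0) : floorDivPhi m < m := by
  have h := floorDivPhi_mul_phi_lt hm
  have : (floorDivPhi m : ℝ) < m := by nlinarith [one_lt_phi, (floorDivPhi m).cast_nonneg (α := ℝ)]
  exact_mod_cast this

lemma lowerWythoff_strictMono : StrictMono lowerWythoff := fun a b h => by
  have := floorDivPhi_mono h.le
  rw [lowerWythoff_eq_add_floorDivPhi, lowerWythoff_eq_add_floorDivPhi]
  omega

lemma upperWythoff_strictMono : StrictMono upperWythoff :=
  lowerWythoff_strictMono.add strictMono_id

end Floors

section WythoffIndex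

/-- By Beatty's theorem every `m` is `lowerWythoff j` or `upperWythoff j` for a unique `j`
(`m = 0` being both, with `j = 0`); this is that `j`. The count `floorDivPhi (m + 1)` of
positive lower Wythoff numbers `≤ m` jumps exactly at the lower Wythoff numbers. -/
noncomputable def wythoffIndex (m : ℕ) : ℕ :=
  if floorDivPhi (m + 1) = floorDivPhi m + 1 then floorDivPhi (m + 1) else m - floorDivPhi m

variable {j m : ℕ}

/- Multiplying `W j ≤ jφ < W j + 1` by `φ - 1` and using `jφ(φ - 1) = j` gives the next two
estimates, from which the values of `floorDivPhi` just after `upperWythoff j` are read off. -/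
lemma lowerWythoff_mul_phi_le (j : ℕ) : (lowerWythoff j : ℝ) * phi ≤ upperWythoff j := by
  have h := mul_le_mul_of_nonneg_right (lowerWythoff_le j) (sub_nonneg.2 one_lt_phi.le)
  rw [upperWythoff]
  push_cast
  nlinarith [mul_phi_mul_phi j]

lemma upperWythoff_add_one_lt (j : ℕ) :
    (upperWythoff j : ℝ) + 1 < (lowerWythoff j + 1) * phi := by
  have h := mul_lt_mul_of_pos_right (lt_lowerWythoff_add_one j) (sub_pos.2 one_lt_phi)
  rw [upperWythoff]
  push_cast
  nlinarith [mul_phi_mul_phi j]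

lemma floorDivPhi_lowerWythoff_add_one (j : ℕ) : floorDivPhi (lowerWythoff j + 1) = j := by
  have := lowerWythoff_le j
  have := lt_lowerWythoff_add_one j
  apply floorDivPhi_eq_of_le_of_lt <;> push_cast <;> nlinarith [one_lt_phi]

lemma floorDivPhi_lowerWythoff_succ (j : ℕ) : floorDivPhi (lowerWythoff (j + 1)) = j := by
  have := lt_lowerWythoff_add_one (j + 1)
  have := lowerWythoff_lt (Nat.add_one_ne_zero j)
  apply floorDivPhi_eq_of_le_of_lt <;> push_cast at * <;> nlinarith [one_lt_phi]

lemma floorDivPhi_upperWythoff (j : ℕ) : floorDivPhi (upperWythoff j) = lowerWythoff j := by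
  have := lowerWythoff_mul_phi_le j
  have := upperWythoff_add_one_lt j
  apply floorDivPhi_eq_of_le_of_lt <;> linarith

lemma floorDivPhi_upperWythoff_add_one (j : ℕ) :
    floorDivPhi (upperWythoff j + 1) = lowerWythoff j := by
  have := lowerWythoff_mul_phi_le j
  have := upperWythoff_add_one_lt j
  apply floorDivPhi_eq_of_le_of_lt <;> push_cast <;> linarith

lemma floorDivPhi_upperWythoff_add_two (j : ℕ) :
    floorDivPhi (upperWythoff j + 2) = lowerWythoff j + 1 := by
  have := lowerWythoff_mul_phi_le j
  have := upperWythoff_add_one_lt j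
  apply floorDivPhi_eq_of_le_of_lt <;> push_cast <;> nlinarith [one_lt_phi, phi_lt_two]

lemma floorDivPhi_upperWythoff_add_three (h : lowerWythoff (j + 1) = lowerWythoff j + 2) :
    floorDivPhi (upperWythoff j + 3) = lowerWythoff j + 2 := by
  have hle : (lowerWythoff j : ℝ) + 2 ≤ (j + 1) * phi := by
    have := lowerWythoff_le (j + 1)
    rw [h] at this
    push_cast at this
    exact this
  have := mul_le_mul_of_nonneg_right hle (sub_nonneg.2 one_lt_phi.le)
  have := upperWythoff_add_one_lt j
  apply floorDivPhi_eq_of_le_of_lt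
  · rw [upperWythoff]
    push_cast
    nlinarith [mul_phi_mul_phi ((j : ℝ) + 1)]
  · push_cast
    nlinarith [three_halves_lt_phi]

lemma wythoffIndex_of_floorDivPhi_succ (h : floorDivPhi (m + 1) = floorDivPhi m + 1) :
    wythoffIndex m = floorDivPhi (m + 1) :=
  if_pos h

lemma wythoffIndex_of_floorDivPhi_succ_eq (h : floorDivPhi (m + 1) = floorDivPhi m) :
    wythoffIndex m = m - floorDivPhi m :=
  if_neg (by omega)

lemma wythoffIndex_lowerWythoff (hj : j ≠ 0) : wythoffIndex (lowerWythoff j) = j := by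
  obtain ⟨k, rfl⟩ := Nat.exists_eq_succ_of_ne_zero hj
  rw [wythoffIndex_of_floorDivPhi_succ, floorDivPhi_lowerWythoff_add_one]
  rw [floorDivPhi_lowerWythoff_add_one, floorDivPhi_lowerWythoff_succ]

lemma wythoffIndex_upperWythoff (j : ℕ) : wythoffIndex (upperWythoff j) = j := by
  rw [wythoffIndex_of_floorDivPhi_succ_eq, floorDivPhi_upperWythoff, upperWythoff]
  · omega
  · rw [floorDivPhi_upperWythoff_add_one, floorDivPhi_upperWythoff]

lemma wythoffIndex_upperWythoff_add_one (j : ℕ) :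
    wythoffIndex (upperWythoff j + 1) = lowerWythoff j + 1 := by
  rw [wythoffIndex_of_floorDivPhi_succ, floorDivPhi_upperWythoff_add_two]
  rw [floorDivPhi_upperWythoff_add_two, floorDivPhi_upperWythoff_add_one]

lemma wythoffIndex_upperWythoff_add_two (h : lowerWythoff (j + 1) = lowerWythoff j + 2) :
    wythoffIndex (upperWythoff j + 2) = lowerWythoff j + 2 := by
  rw [wythoffIndex_of_floorDivPhi_succ, floorDivPhi_upperWythoff_add_three h]
  rw [floorDivPhi_upperWythoff_add_three h, floorDivPhi_upperWythoff_add_two]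

lemma wythoffIndex_lowerWythoff_add_one (h : lowerWythoff (j + 1) = lowerWythoff j + 2) :
    wythoffIndex (lowerWythoff j + 1) = floorDivPhi j + 1 := by
  have hB : floorDivPhi (lowerWythoff j + 1 + 1) = floorDivPhi (lowerWythoff j + 1) := by
    rw [floorDivPhi_lowerWythoff_add_one, add_assoc, ← h, floorDivPhi_lowerWythoff_succ]
  rw [wythoffIndex_of_floorDivPhi_succ_eq hB, floorDivPhi_lowerWythoff_add_one,
    lowerWythoff_eq_add_floorDivPhi]
  omega

lemma lowerWythoff_wythoffIndex_or_upperWythoff (m : ℕ) :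
    lowerWythoff (wythoffIndex m) = m ∨ upperWythoff (wythoffIndex m) = m := by
  rcases (floorDivPhi_succ_le m).lt_or_eq with h | h
  · right
    have h' : floorDivPhi (m + 1) = floorDivPhi m :=
      le_antisymm (by omega) (floorDivPhi_mono m.le_succ)
    have hb := floorDivPhi_le_self m
    have hlo := mul_le_mul_of_nonneg_left (floorDivPhi_mul_phi_le m) phi_pos.le
    have hhi : (m : ℝ) - floorDivPhi m * phi < phi - 1 := by
      have := lt_floorDivPhi_add_one_mul_phi (m + 1)
      rw [h'] at this
      push_cast at this
      linarith
    have hhi' := mul_lt_mul_of_pos_left hhi phi_pos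
    have hW : lowerWythoff (m - floorDivPhi m) = floorDivPhi m := by
      apply lowerWythoff_eq_of_le_of_lt <;> rw [Nat.cast_sub hb] <;>
        nlinarith [mul_phi_mul_phi (floorDivPhi m), mul_phi_mul_phi 1]
    rw [wythoffIndex_of_floorDivPhi_succ_eq h', upperWythoff, hW]
    omega
  · left
    have hlo := lt_floorDivPhi_add_one_mul_phi m
    have hhi := floorDivPhi_mul_phi_lt (Nat.add_one_ne_zero m)
    rw [h] at hhi
    rw [wythoffIndex_of_floorDivPhi_succ h, h]
    apply lowerWythoff_eq_of_le_of_lt <;> push_cast at * <;> linarith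

end WythoffIndex

section MiddleSegment

lemma lowerWythoff_lowerWythoff_le (j : ℕ) : lowerWythoff (lowerWythoff j) ≤ upperWythoff j := by
  exact_mod_cast (lowerWythoff_le (lowerWythoff j)).trans (lowerWythoff_mul_phi_le j)

lemma upperWythoff_lt_lowerWythoff_lowerWythoff_add_one (j : ℕ) :
    upperWythoff j < lowerWythoff (lowerWythoff j + 1) := by
  have := lt_lowerWythoff_add_one (lowerWythoff j + 1)
  have := upperWythoff_add_one_lt j
  push_cast at *
  exact_mod_cast (by linarith : (upperWythoff j : ℝ) < lowerWythoff (lowerWythoff j + 1))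

lemma upperWythoff_floorDivPhi_lt {m : ℕ} (hm : m ≠ 0) :
    upperWythoff (floorDivPhi m) < lowerWythoff m := by
  have : lowerWythoff (floorDivPhi m) < m := by
    exact_mod_cast (lowerWythoff_le (floorDivPhi m)).trans_lt (floorDivPhi_mul_phi_lt hm)
  rw [upperWythoff, lowerWythoff_eq_add_floorDivPhi m]
  omega

lemma le_lowerWythoff_floorDivPhi_add_one (m : ℕ) : m ≤ lowerWythoff (floorDivPhi m + 1) := by
  have h := lt_lowerWythoff_add_one (floorDivPhi m + 1)
  push_cast at h
  exact Nat.lt_add_one_iff.1 (by exact_mod_cast (lt_floorDivPhi_add_one_mul_phi m).trans h)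

def middleSegment (n : ℕ) : Set ℕ := Ico (floorDivPhi (n + 2)) (lowerWythoff (n + 1))

variable {n : ℕ}

lemma mem_middleSegment_iff {i : ℕ} :
    i ∈ middleSegment n ↔ i + n + 2 ∈ Icc (lowerWythoff (n + 2)) (upperWythoff (n + 1)) := by
  rw [middleSegment, mem_Ico, mem_Icc, upperWythoff, lowerWythoff_eq_add_floorDivPhi (n + 2)]
  omega

lemma wythoffIndex_cases {m : ℕ} (hm : m ∈ Icc (lowerWythoff (n + 2)) (upperWythoff (n + 1))) :
    (n + 2 ≤ wythoffIndex m ∧ wythoffIndex m ≤ lowerWythoff (n + 1) ∧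
        lowerWythoff (wythoffIndex m) = m) ∨
      (floorDivPhi (n + 2) < wythoffIndex m ∧ wythoffIndex m ≤ n + 1 ∧
        upperWythoff (wythoffIndex m) = m) := by
  obtain ⟨h₁, h₂⟩ := hm
  rcases lowerWythoff_wythoffIndex_or_upperWythoff m with h | h
  · refine .inl ⟨lowerWythoff_strictMono.le_iff_le.1 (h.symm ▸ h₁), ?_, h⟩
    have := upperWythoff_lt_lowerWythoff_lowerWythoff_add_one (n + 1)
    exact Nat.lt_add_one_iff.1 (lowerWythoff_strictMono.lt_iff_lt.1 (by omega))
  · refine .inr ⟨upperWythoff_strictMono.lt_iff_lt.1 ?_,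
      upperWythoff_strictMono.le_iff_le.1 (h.symm ▸ h₂), h⟩
    have := upperWythoff_floorDivPhi_lt (Nat.add_one_ne_zero (n + 1))
    exact this.trans_le (h.symm ▸ h₁)

lemma mapsTo_middleSegment :
    MapsTo (fun i => wythoffIndex (i + n + 2) - 1) (middleSegment n) (middleSegment n) := by
  intro i hi
  have := floorDivPhi_lt_self (show n + 2 ≠ 0 by omega)
  have := lowerWythoff_eq_add_floorDivPhi (n + 1)
  simp only [middleSegment, mem_Ico]
  rcases wythoffIndex_cases (mem_middleSegment_iff.1 hi) with h | h <;> omega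

lemma injOn_middleSegment :
    InjOn (fun i => wythoffIndex (i + n + 2) - 1) (middleSegment n) := by
  intro i hi i' hi' hii'
  simp only at hii'
  rcases wythoffIndex_cases (mem_middleSegment_iff.1 hi) with ⟨ha, hb, hW⟩ | ⟨ha, hb, hU⟩ <;>
    rcases wythoffIndex_cases (mem_middleSegment_iff.1 hi') with
      ⟨ha', hb', hW'⟩ | ⟨ha', hb', hU'⟩
  · have : wythoffIndex (i + n + 2) = wythoffIndex (i' + n + 2) := by omega
    rw [this] at hW
    omega
  · omega
  · omega
  · have : wythoffIndex (i + n + 2) = wythoffIndex (i' + n + 2) := by omega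
    rw [this] at hU
    omega

lemma surjOn_middleSegment :
    SurjOn (fun i => wythoffIndex (i + n + 2) - 1) (middleSegment n) (middleSegment n) := by
  intro v hv
  rw [middleSegment, mem_Ico] at hv
  have := lowerWythoff_eq_add_floorDivPhi (n + 2)
  rcases Nat.lt_or_ge v (n + 1) with hv' | hv'
  · have h₁ : lowerWythoff (n + 2) < upperWythoff (floorDivPhi (n + 2) + 1) := by
      have := le_lowerWythoff_floorDivPhi_add_one (n + 2)
      rw [upperWythoff]
      omega
    have h₂ := upperWythoff_strictMono.monotone (show floorDivPhi (n + 2) + 1 ≤ v + 1 by omega)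
    have h₃ := upperWythoff_strictMono.monotone (show v + 1 ≤ n + 1 by omega)
    have hU : upperWythoff (v + 1) - (n + 2) + n + 2 = upperWythoff (v + 1) := by omega
    refine ⟨upperWythoff (v + 1) - (n + 2), mem_middleSegment_iff.2 ⟨by omega, by omega⟩, ?_⟩
    simp only [hU, wythoffIndex_upperWythoff, Nat.add_sub_cancel]
  · have h₁ := lowerWythoff_strictMono.monotone (show n + 2 ≤ v + 1 by omega)
    have h₂ := (lowerWythoff_strictMono.monotone (show v + 1 ≤ lowerWythoff (n + 1) by omega)).trans
      (lowerWythoff_lowerWythoff_le (n + 1))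
    have hW : lowerWythoff (v + 1) - (n + 2) + n + 2 = lowerWythoff (v + 1) := by omega
    refine ⟨lowerWythoff (v + 1) - (n + 2), mem_middleSegment_iff.2 ⟨by omega, by omega⟩, ?_⟩
    simp only [hW, wythoffIndex_lowerWythoff (Nat.add_one_ne_zero v), Nat.add_sub_cancel]

lemma bijOn_middleSegment :
    BijOn (fun i => wythoffIndex (i + n + 2) - 1) (middleSegment n) (middleSegment n) :=
  ⟨mapsTo_middleSegment, injOn_middleSegment, surjOn_middleSegment⟩

lemma wythoffIndex_add_sub_one_ne {i : ℕ} (hi : i ∈ middleSegment n) :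
    wythoffIndex (i + n + 2) - 1 ≠ i := by
  have hcases := wythoffIndex_cases (mem_middleSegment_iff.1 hi)
  intro hfix
  have hidx : wythoffIndex (i + n + 2) = i + 1 := by
    rcases hcases with h | h <;> omega
  rcases hcases with ⟨-, hb, hW⟩ | ⟨ha, -, hU⟩
  · rw [hidx] at hb hW
    have := floorDivPhi_mono hb
    rw [floorDivPhi_lowerWythoff_succ] at this
    rw [lowerWythoff_eq_add_floorDivPhi] at hW
    omega
  · rw [hidx] at ha hU
    have := le_lowerWythoff_floorDivPhi_add_one (n + 2)
    have := lowerWythoff_strictMono.monotone (show floorDivPhi (n + 2) + 1 ≤ i + 1 by omega)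
    rw [upperWythoff] at hU
    omega

end MiddleSegment

section HurtSada

lemma floorDivPhi_two : floorDivPhi 2 = 1 :=
  floorDivPhi_eq_of_le_of_lt (by push_cast; linarith [phi_lt_two])
    (by push_cast; linarith [one_lt_phi])

lemma floorDivPhi_three : floorDivPhi 3 = 1 :=
  floorDivPhi_eq_of_le_of_lt (by push_cast; linarith [phi_lt_two])
    (by push_cast; linarith [three_halves_lt_phi])

lemma lowerWythoff_one : lowerWythoff 1 = 1 :=
  lowerWythoff_eq_of_le_of_lt (by push_cast; linarith [one_lt_phi])
    (by push_cast; linarith [phi_lt_two])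

lemma floorDivPhi_add_three_le_or_lt (n : ℕ) :
    floorDivPhi (n + 3) ≤ floorDivPhi (n + 2) ∨ floorDivPhi (n + 3) < lowerWythoff (n + 1) := by
  have h₃ : floorDivPhi (n + 3) ≤ floorDivPhi (n + 2) + 1 := floorDivPhi_succ_le _
  have h₂ : floorDivPhi (n + 2) ≤ floorDivPhi (n + 1) + 1 := floorDivPhi_succ_le _
  have hW := lowerWythoff_eq_add_floorDivPhi (n + 1)
  by_cases hn : 2 ≤ n
  · exact .inr (by omega)
  · interval_cases n <;> norm_num [floorDivPhi_two, floorDivPhi_three] at h₃ hW ⊢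
    omega

lemma A_zero_apply (k : ℕ) : A 0 k = k := by
  rw [A]

lemma A_succ_apply (n j : ℕ) :
    A (n + 1) j =
      if j < sInf {i | A n i = n + 1} then A n j
      else if j < sInf {i | A n i = n + 1} + (n + 1) then A n (j + 1)
      else if j = sInf {i | A n i = n + 1} + (n + 1) then n + 1
      else A n j := by
  rw [A]

open Classical in
noncomputable def hurtSadaRow (n i : ℕ) : ℕ :=
  if i ∈ middleSegment n then wythoffIndex (i + n + 2) - 1 else i

variable {n i j : ℕ}

lemma hurtSadaRow_of_mem (h : i ∈ middleSegment n) :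
    hurtSadaRow n i = wythoffIndex (i + n + 2) - 1 :=
  if_pos h

lemma hurtSadaRow_of_lt (h : i < floorDivPhi (n + 2)) : hurtSadaRow n i = i :=
  if_neg fun hi => (not_lt.2 hi.1) h

lemma hurtSadaRow_of_le (h : lowerWythoff (n + 1) ≤ i) : hurtSadaRow n i = i :=
  if_neg fun hi => (not_le.2 hi.2) h

lemma hurtSadaRow_zero (i : ℕ) : hurtSadaRow 0 i = i := by
  rcases Nat.eq_zero_or_pos i with rfl | hi
  · exact hurtSadaRow_of_lt (by rw [floorDivPhi_two]; omega)
  · exact hurtSadaRow_of_le (by rw [lowerWythoff_one]; omega)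

lemma hurtSadaRow_floorDivPhi (n : ℕ) : hurtSadaRow n (floorDivPhi (n + 2)) = n + 1 := by
  have := floorDivPhi_lt_self (show n + 2 ≠ 0 by omega)
  have := lowerWythoff_eq_add_floorDivPhi (n + 1)
  by_cases h : floorDivPhi (n + 2) < lowerWythoff (n + 1)
  · rw [hurtSadaRow_of_mem ⟨le_rfl, h⟩, show floorDivPhi (n + 2) + n + 2 = lowerWythoff (n + 2) by
      rw [lowerWythoff_eq_add_floorDivPhi]; omega, wythoffIndex_lowerWythoff (by omega)]
    rfl
  · rw [hurtSadaRow_of_le (not_lt.1 h)]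
    omega

lemma sInf_hurtSadaRow (n : ℕ) : sInf {i | hurtSadaRow n i = n + 1} = floorDivPhi (n + 2) := by
  refine le_antisymm (Nat.sInf_le (hurtSadaRow_floorDivPhi n))
    (le_csInf ⟨_, hurtSadaRow_floorDivPhi n⟩ fun i hi => not_lt.1 fun h => ?_)
  rw [mem_ofPred_eq, hurtSadaRow_of_lt h] at hi
  have := floorDivPhi_lt_self (show n + 2 ≠ 0 by omega)
  omega

-- stated with `n + 3`, `n + 2` rather than `n + 1 + 2`, `n + 1 + 1`, which `omega` would treat as
-- different atoms
lemma hurtSadaRow_succ_of_mem (h₁ : floorDivPhi (n + 3) ≤ i) (h₂ : i < lowerWythoff (n + 2)) :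
    hurtSadaRow (n + 1) i = wythoffIndex (i + n + 3) - 1 :=
  hurtSadaRow_of_mem (n := n + 1) ⟨h₁, h₂⟩

lemma hurtSadaRow_succ_of_lt_lowerWythoff (hj : floorDivPhi (n + 2) ≤ j)
    (hj' : j + 1 < lowerWythoff (n + 1)) : hurtSadaRow (n + 1) j = hurtSadaRow n (j + 1) := by
  have hW₁ := lowerWythoff_eq_add_floorDivPhi (n + 1)
  have hW₂ := lowerWythoff_eq_add_floorDivPhi (n + 2)
  have hW₃ := lowerWythoff_eq_add_floorDivPhi (n + 3)
  have hB₂ : floorDivPhi (n + 2) ≤ floorDivPhi (n + 1) + 1 := floorDivPhi_succ_le _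
  have hB₃ : floorDivPhi (n + 3) ≤ floorDivPhi (n + 2) + 1 := floorDivPhi_succ_le _
  have hB₁₂ := floorDivPhi_mono (show n + 1 ≤ n + 2 by omega)
  rw [hurtSadaRow_of_mem (n := n) (i := j + 1) ⟨by omega, hj'⟩]
  by_cases h : floorDivPhi (n + 3) ≤ j
  · rw [hurtSadaRow_succ_of_mem h (by omega), show j + n + 3 = j + 1 + n + 2 by omega]
  · rw [hurtSadaRow_of_lt (n := n + 1) (show j < floorDivPhi (n + 3) by omega),
      show j + 1 + n + 2 = lowerWythoff (n + 2) + 1 by omega,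
      wythoffIndex_lowerWythoff_add_one (show lowerWythoff (n + 3) = _ by omega)]
    omega

lemma hurtSadaRow_succ_of_lowerWythoff_le (hj : floorDivPhi (n + 2) ≤ j)
    (hj' : lowerWythoff (n + 1) ≤ j + 1) (hj'' : j + 1 < lowerWythoff (n + 2)) :
    hurtSadaRow (n + 1) j = hurtSadaRow n (j + 1) := by
  have hW₁ := lowerWythoff_eq_add_floorDivPhi (n + 1)
  have hW₂ := lowerWythoff_eq_add_floorDivPhi (n + 2)
  have hB₂ : floorDivPhi (n + 2) ≤ floorDivPhi (n + 1) + 1 := floorDivPhi_succ_le _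
  have hB₃ : floorDivPhi (n + 3) ≤ j := by
    rcases floorDivPhi_add_three_le_or_lt n with h | h <;> omega
  rw [hurtSadaRow_of_le hj', hurtSadaRow_succ_of_mem hB₃ (by omega)]
  rcases (show j + 1 = lowerWythoff (n + 1) ∨ j = lowerWythoff (n + 1) by omega) with h | h
  · rw [show j + n + 3 = upperWythoff (n + 1) + 1 by rw [upperWythoff]; omega,
      wythoffIndex_upperWythoff_add_one]
    omega
  · rw [show j + n + 3 = upperWythoff (n + 1) + 2 by rw [upperWythoff]; omega,
      wythoffIndex_upperWythoff_add_two (show lowerWythoff (n + 2) = _ by omega)]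
    omega

lemma hurtSadaRow_succ (n j : ℕ) :
    hurtSadaRow (n + 1) j =
      if j < floorDivPhi (n + 2) then hurtSadaRow n j
      else if j < floorDivPhi (n + 2) + (n + 1) then hurtSadaRow n (j + 1)
      else if j = floorDivPhi (n + 2) + (n + 1) then n + 1
      else hurtSadaRow n j := by
  have hW₂ := lowerWythoff_eq_add_floorDivPhi (n + 2)
  have hW₁₂ := lowerWythoff_strictMono.monotone (show n + 1 ≤ n + 2 by omega)
  have hB₃ : floorDivPhi (n + 3) ≤ floorDivPhi (n + 2) + 1 := floorDivPhi_succ_le _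
  have hB₂₃ := floorDivPhi_mono (show n + 2 ≤ n + 3 by omega)
  split_ifs with h₁ h₂ h₃
  · rw [hurtSadaRow_of_lt h₁, hurtSadaRow_of_lt (n := n + 1) (h₁.trans_le hB₂₃)]
  · by_cases h : j + 1 < lowerWythoff (n + 1)
    · exact hurtSadaRow_succ_of_lt_lowerWythoff (not_lt.1 h₁) h
    · exact hurtSadaRow_succ_of_lowerWythoff_le (not_lt.1 h₁) (not_lt.1 h) (by omega)
  · rw [hurtSadaRow_succ_of_mem (by omega) (by omega),
      show j + n + 3 = upperWythoff (n + 2) by rw [upperWythoff]; omega,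
      wythoffIndex_upperWythoff]
    rfl
  · rw [hurtSadaRow_of_le (n := n + 1) (show lowerWythoff (n + 2) ≤ j by omega),
      hurtSadaRow_of_le (by omega)]

theorem A_eq_hurtSadaRow : ∀ n, A n = hurtSadaRow n
  | 0 => funext fun i => by rw [A_zero_apply, hurtSadaRow_zero]
  | n + 1 => funext fun j => by
    rw [A_succ_apply, A_eq_hurtSadaRow n, sInf_hurtSadaRow, hurtSadaRow_succ]

end HurtSada

theorem middle_segment_permutation_general (n : ℕ) :
    Set.BijOn (A n) (Set.Ioo (⌊((n : ℝ) + 2) / phi⌋₊ - 1) ⌊((n : ℝ) + 1) * phi⌋₊)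
        (Set.Ioo (⌊((n : ℝ) + 2) / phi⌋₊ - 1) ⌊((n : ℝ) + 1) * phi⌋₊) ∧
      ∀ i ∈ Set.Ioo (⌊((n : ℝ) + 2) / phi⌋₊ - 1) ⌊((n : ℝ) + 1) * phi⌋₊, A n i ≠ i := by
  have hb : ⌊((n : ℝ) + 2) / phi⌋₊ = floorDivPhi (n + 2) := by
    rw [floorDivPhi]
    push_cast
    rfl
  have hc : ⌊((n : ℝ) + 1) * phi⌋₊ = lowerWythoff (n + 1) := by
    rw [lowerWythoff]
    push_cast
    rfl
  have hseg : Ioo (floorDivPhi (n + 2) - 1) (lowerWythoff (n + 1)) = middleSegment n := by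
    have := floorDivPhi_mono (show 2 ≤ n + 2 by omega)
    rw [floorDivPhi_two] at this
    ext i
    simp only [middleSegment, mem_Ioo, mem_Ico]
    omega
  have hA : EqOn (A n) (fun i => wythoffIndex (i + n + 2) - 1) (middleSegment n) :=
    fun i hi => by rw [A_eq_hurtSadaRow, hurtSadaRow_of_mem hi]
  rw [hb, hc, hseg]
  exact ⟨bijOn_middleSegment.congr hA.symm, fun i hi => hA hi ▸ wythoffIndex_add_sub_one_ne hi⟩

theorem middle_segment_permutation (n : ℕ) (hn : 1 ≤ n) :
    Set.BijOn (A n) (Set.Ioo (⌊((n : ℝ) + 2) / phi⌋₊ - 1) ⌊((n : ℝ) + 1) * phi⌋₊)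
        (Set.Ioo (⌊((n : ℝ) + 2) / phi⌋₊ - 1) ⌊((n : ℝ) + 1) * phi⌋₊) ∧
      ∀ i ∈ Set.Ioo (⌊((n : ℝ) + 2) / phi⌋₊ - 1) ⌊((n : ℝ) + 1) * phi⌋₊, A n i ≠ i :=
  middle_segment_permutation_general n
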